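/- arXiv:1707.08768 — 3 statements merged into one kernel-verified Lean document; each statement's English description precedes it below -/
import Mathlib

section
/- The derivation D = x^2 ∂/∂u - 2yu ∂/∂v of the polynomial ring ℂ[x,y,u,v] is locally nilpotent and annihilates the polynomial f = x^2(x-1)v + yu^2 - x, hence induces a locally nilpotent derivation on the quotient ring ℂ[x,y,u,v]/(f). -/
/-!
By the Leibniz rule, the elements annihilated by some iterate of a derivation form a
subalgebra, so local nilpotency only has to be checked on generators. `D0` is triangular on
them: it kills `x` and `y`, maps `u` into `ℂ[x]` and `v` into `ℂ[y, u]`. Since `D0 f0 = 0`,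
`D0 (f0 * c) = f0 * D0 c`, so `D0` preserves the ideal `(f0)`.
-/

open MvPolynomial

/-- A derivation `D` is locally nilpotent if every element is annihilated by some
iterate of `D`. -/
def Derivation.IsLocallyNilpotent {R A : Type*} [CommRing R] [CommRing A] [Algebra R A]
    (D : Derivation R A A) : Prop :=
  ∀ a : A, ∃ n : ℕ, (⇑D)^[n] a = 0

/-- Coordinates on `𝔸⁴`: `x = X 0`, `y = X 1`, `u = X 2`, `v = X 3`. -/
noncomputable abbrev R4 : Type := MvPolynomial (Fin 4) ℂ

/-- The `ℂ[x,y]`-derivation `D = x²(x-1) ∂/∂u - 2yu ∂/∂v` of `ℂ[x,y,u,v]`. -/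
noncomputable def D0 : Derivation ℂ R4 R4 :=
  MvPolynomial.mkDerivation ℂ
    (fun i => if i = 2 then (X 0) ^ 2 * (X 0 - 1)
              else if i = 3 then -(2 * X 1 * X 2) else 0)

/-- `f = x²(x-1)v + yu² - x`. -/
noncomputable def f0 : R4 := (X 0) ^ 2 * (X 0 - 1) * X 3 + X 1 * (X 2) ^ 2 - X 0

namespace Derivation

open Function

variable {R A : Type*} [CommRing R] [CommRing A] [Algebra R A] (D : Derivation R A A)

theorem iterate_eq_zero_of_le {a : A} {m n : ℕ} (hmn : m ≤ n) (ha : D^[m] a = 0) :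
    D^[n] a = 0 := by
  obtain ⟨k, rfl⟩ := Nat.exists_eq_add_of_le hmn
  rw [add_comm, iterate_add_apply, ha, iterate_map_zero]

/-- Peeling off one factor of `D` from `D^[m+l] (a * b)` with the Leibniz rule lowers either
`m` or `l`, whence the nested induction. -/
theorem iterate_add_apply_mul_eq_zero {a b : A} {m l : ℕ} (ha : D^[m] a = 0)
    (hb : D^[l] b = 0) : D^[m + l] (a * b) = 0 := by
  induction m generalizing a b l with
  | zero => simp_all
  | succ m ihm =>
    induction l generalizing b with
    | zero => simp_all
    | succ l ihl =>
      rw [iterate_succ_apply] at ha hb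
      have hDb : D^[m + 1 + l] (a * D b) = 0 := ihl hb
      have hDa : D^[m + 1 + l] (b * D a) = 0 := by
        rw [mul_comm, add_right_comm]
        exact ihm ha (by rwa [iterate_succ_apply])
      rw [← add_assoc, iterate_succ_apply, leibniz, iterate_map_add, smul_eq_mul, smul_eq_mul,
        hDb, hDa, add_zero]

def locallyNilpotentSubalgebra : Subalgebra R A where
  carrier := {a | ∃ n, D^[n] a = 0}
  mul_mem' := fun ⟨m, ha⟩ ⟨l, hb⟩ => ⟨m + l, D.iterate_add_apply_mul_eq_zero ha hb⟩
  add_mem' := fun {a b} ⟨m, ha⟩ ⟨l, hb⟩ => ⟨max m l, by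
    rw [iterate_map_add, D.iterate_eq_zero_of_le (le_max_left m l) ha,
      D.iterate_eq_zero_of_le (le_max_right m l) hb, add_zero]⟩
  algebraMap_mem' r := ⟨1, D.map_algebraMap r⟩

theorem mem_locallyNilpotentSubalgebra_of_apply_mem {a : A}
    (ha : D a ∈ D.locallyNilpotentSubalgebra) : a ∈ D.locallyNilpotentSubalgebra :=
  let ⟨n, hn⟩ := ha
  ⟨n + 1, by rwa [iterate_succ_apply]⟩

theorem isLocallyNilpotent_of_adjoin_eq_top {s : Set A} (hs : Algebra.adjoin R s = ⊤)
    (h : s ⊆ D.locallyNilpotentSubalgebra) : D.IsLocallyNilpotent := fun a =>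
  Algebra.adjoin_le h (hs ▸ Algebra.mem_top : a ∈ Algebra.adjoin R s)

theorem apply_mem_span_singleton {f g : A} (hf : f ∣ D f) (hg : g ∈ Ideal.span {f}) :
    D g ∈ Ideal.span {f} := by
  obtain ⟨c, rfl⟩ := Ideal.mem_span_singleton.mp hg
  rw [Ideal.mem_span_singleton, leibniz, smul_eq_mul, smul_eq_mul]
  exact dvd_add (dvd_mul_right f (D c)) (dvd_mul_of_dvd_right hf c)

end Derivation

theorem D0_X_zero : D0 (X 0) = 0 := by simp [D0, mkDerivation_X]

theorem D0_X_one : D0 (X 1) = 0 := by simp [D0, mkDerivation_X]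

theorem D0_X_two : D0 (X 2) = (X 0) ^ 2 * (X 0 - 1) := by simp [D0, mkDerivation_X]

theorem D0_X_three : D0 (X 3) = -(2 * X 1 * X 2) := by simp [D0, mkDerivation_X]

theorem X_mem_locallyNilpotentSubalgebra_D0 (i : Fin 4) :
    X i ∈ D0.locallyNilpotentSubalgebra := by
  set S := D0.locallyNilpotentSubalgebra
  have hx : X 0 ∈ S := D0.mem_locallyNilpotentSubalgebra_of_apply_mem (D0_X_zero ▸ S.zero_mem)
  have hy : X 1 ∈ S := D0.mem_locallyNilpotentSubalgebra_of_apply_mem (D0_X_one ▸ S.zero_mem)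
  have hu : X 2 ∈ S := D0.mem_locallyNilpotentSubalgebra_of_apply_mem <| D0_X_two ▸
    S.mul_mem (S.pow_mem hx 2) (S.sub_mem hx S.one_mem)
  have hv : X 3 ∈ S := D0.mem_locallyNilpotentSubalgebra_of_apply_mem <| D0_X_three ▸
    S.neg_mem (S.mul_mem (S.mul_mem (S.natCast_mem 2) hy) hu)
  fin_cases i <;> assumption

theorem D0_isLocallyNilpotent : D0.IsLocallyNilpotent :=
  D0.isLocallyNilpotent_of_adjoin_eq_top (adjoin_range_X (R := ℂ))
    (Set.range_subset_iff.mpr X_mem_locallyNilpotentSubalgebra_D0)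

theorem D0_f0 : D0 f0 = 0 := by
  simp only [f0, map_sub, map_add, Derivation.leibniz, Derivation.leibniz_pow, D0_X_zero,
    D0_X_one, D0_X_two, D0_X_three, Derivation.map_one_eq_zero, smul_eq_mul, nsmul_eq_mul]
  ring

/-- The derivation `D = x²(x-1)∂_u - 2yu∂_v` of `ℂ[x,y,u,v]` is locally nilpotent and
annihilates `f = x²(x-1)v + yu² - x`; in particular it preserves the ideal `(f)` and
hence induces a locally nilpotent derivation on `ℂ[x,y,u,v]/(f)`. -/
theorem stmt_0 :
    D0.IsLocallyNilpotent ∧ D0 f0 = 0 ∧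
      ∀ g ∈ Ideal.span {f0}, D0 g ∈ Ideal.span {f0} :=
  ⟨D0_isLocallyNilpotent, D0_f0,
    fun _ => D0.apply_mem_span_singleton (D0_f0 ▸ dvd_zero f0)⟩
end

section
/- Let S = Spec A be an affine surface, o = V(x,y) a complete-intersection smooth point, S̃ ⊂ S × ℙ¹ the blow-up {xt₁ = yt₀}, and θ : W → S̃ any torsor under the line bundle M(ℓ) = Spec Sym O_{S̃}(-ℓE) for some ℓ ≥ 0. Then H¹(W, O_W) = 0. -/
set_option synthInstance.maxHeartbeats 1000000
set_option maxHeartbeats 1000000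

/-- Chart at `0` of the blow-up of `Spec A` at `o = V(x,y)`: `R₀ = A[z]/(x - y·z)`. -/
noncomputable abbrev BlowChart (A : Type*) [CommRing A] (x y : A) : Type _ :=
  Polynomial A ⧸
    Ideal.span {(Polynomial.C x - Polynomial.C y * Polynomial.X : Polynomial A)}

/-- The coordinate ring `R₀[u]` of the chart `W₀` of an `M(ℓ)`-torsor over the blow-up. -/
noncomputable abbrev WChart (A : Type*) [CommRing A] (x y : A) : Type _ :=
  Polynomial (BlowChart A x y)

/-- The coordinate ring `(R₀)_z[u]` of the overlap `W₀ ∩ W_∞`, realized as the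
localization of `R₀[u]` at `z`. -/
noncomputable abbrev WOverlap (A : Type*) [CommRing A] (x y : A) : Type _ :=
  Localization.Away
    (Polynomial.C (Ideal.Quotient.mk _ Polynomial.X : BlowChart A x y) : WChart A x y)

/-!
Write `w = z⁻¹` in `(R₀)_z[u]`; every element is an `A`-combination of `zᵏ wⁿ uᵐ`, and the
monomials `zᵏ uᵐ` come from `W₀`. For `wᵈ uᵐ` substitute `u = wˡ (v - p)` with `v = zˡ u + p`:
then `wᵈ uᵐ = w^(d+ℓm) vᵐ - w^(d+ℓm) (vᵐ - z^(ℓm) uᵐ)`, where the first term comes from `W_∞`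
and the second has lower degree in `u` with coefficients in `A[z, z⁻¹]` (as `p` does), so
induction on the degree in `u` concludes.
-/

section LowerDegree

variable {A L : Type*} [CommRing A] [CommRing L] [Algebra A L]

def lowerDegreeSpan (B : Subalgebra A L) (u : L) (m : ℕ) : Submodule A L :=
  Submodule.span A {q | ∃ b ∈ B, ∃ i < m, q = b * u ^ i}

variable {B : Subalgebra A L} {u : L}

theorem mul_pow_mem_lowerDegreeSpan {b : L} (hb : b ∈ B) {i m : ℕ} (hi : i < m) :
    b * u ^ i ∈ lowerDegreeSpan B u m :=
  Submodule.subset_span ⟨b, hb, i, hi, rfl⟩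

theorem lowerDegreeSpan_mono {m n : ℕ} (h : m ≤ n) :
    lowerDegreeSpan B u m ≤ lowerDegreeSpan B u n :=
  Submodule.span_mono fun _ ⟨b, hb, i, hi, hq⟩ => ⟨b, hb, i, hi.trans_le h, hq⟩

theorem mul_mem_lowerDegreeSpan_of_mem {b q : L} {m : ℕ} (hb : b ∈ B)
    (hq : q ∈ lowerDegreeSpan B u m) : b * q ∈ lowerDegreeSpan B u m := by
  induction hq using Submodule.span_induction with
  | mem q hq =>
    obtain ⟨b', hb', i, hi, rfl⟩ := hq
    rw [← mul_assoc]
    exact mul_pow_mem_lowerDegreeSpan (mul_mem hb hb') hi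
  | zero => simp
  | add q r _ _ hq hr => rw [mul_add]; exact add_mem hq hr
  | smul a q _ hq => rw [mul_smul_comm]; exact Submodule.smul_mem _ a hq

theorem mul_mem_lowerDegreeSpan_succ {q : L} {m : ℕ} (hq : q ∈ lowerDegreeSpan B u m) :
    u * q ∈ lowerDegreeSpan B u (m + 1) := by
  induction hq using Submodule.span_induction with
  | mem q hq =>
    obtain ⟨b, hb, i, hi, rfl⟩ := hq
    rw [show u * (b * u ^ i) = b * u ^ (i + 1) by ring]
    exact mul_pow_mem_lowerDegreeSpan hb (by omega)
  | zero => simp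
  | add q r _ _ hq hr => rw [mul_add]; exact add_mem hq hr
  | smul a q _ hq => rw [mul_smul_comm]; exact Submodule.smul_mem _ a hq

theorem pow_sub_leading_mem_lowerDegreeSpan {a p : L} (ha : a ∈ B) (hp : p ∈ B) (m : ℕ) :
    (a * u + p) ^ m - a ^ m * u ^ m ∈ lowerDegreeSpan B u m := by
  induction m with
  | zero => simp
  | succ m ih =>
    have h : (a * u + p) ^ (m + 1) - a ^ (m + 1) * u ^ (m + 1) =
        a * (u * ((a * u + p) ^ m - a ^ m * u ^ m)) + p * ((a * u + p) ^ m - a ^ m * u ^ m) +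
          a ^ m * p * u ^ m := by ring
    rw [h]
    refine add_mem (add_mem ?_ ?_) ?_
    · exact mul_mem_lowerDegreeSpan_of_mem ha (mul_mem_lowerDegreeSpan_succ ih)
    · exact mul_mem_lowerDegreeSpan_of_mem hp (lowerDegreeSpan_mono m.le_succ ih)
    · exact mul_pow_mem_lowerDegreeSpan (mul_mem (pow_mem ha m) hp) m.lt_succ_self

end LowerDegree

section LaurentChange

variable {A L : Type*} [CommRing A] [CommRing L] [Algebra A L] {z w u p : L}

theorem mem_span_pow_mul_pow_of_mem_adjoin {b : L} (hb : b ∈ Algebra.adjoin A {z, w}) :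
    b ∈ Submodule.span A {q | ∃ i j : ℕ, z ^ i * w ^ j = q} := by
  rw [← Subalgebra.mem_toSubmodule, Algebra.adjoin_eq_span] at hb
  exact Submodule.span_mono (fun q hq => (Submonoid.mem_closure_pair z w q).mp hq) hb

theorem pow_mul_pow_eq_of_mul_eq_one (hzw : z * w = 1) (i j : ℕ) :
    (∃ d, z ^ i * w ^ j = z ^ d) ∨ ∃ d, z ^ i * w ^ j = w ^ d := by
  have hpow (n : ℕ) : z ^ n * w ^ n = 1 := by rw [← mul_pow, hzw, one_pow]
  rcases le_total j i with h | h
  · obtain ⟨d, rfl⟩ := Nat.exists_eq_add_of_le h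
    exact .inl ⟨d, by linear_combination z ^ d * hpow j⟩
  · obtain ⟨d, rfl⟩ := Nat.exists_eq_add_of_le h
    exact .inr ⟨d, by linear_combination w ^ d * hpow i⟩

theorem mul_pow_mem_sup_adjoin (hzw : z * w = 1) (hp : p ∈ Algebra.adjoin A {z, w}) (ℓ m : ℕ)
    {b : L} (hb : b ∈ Algebra.adjoin A {z, w}) :
    b * u ^ m ∈ Subalgebra.toSubmodule (Algebra.adjoin A {z, u}) ⊔
      Subalgebra.toSubmodule (Algebra.adjoin A {w, z ^ ℓ * u + p}) := by
  set M := Subalgebra.toSubmodule (Algebra.adjoin A {z, u}) ⊔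
      Subalgebra.toSubmodule (Algebra.adjoin A {w, z ^ ℓ * u + p})
  induction m using Nat.strong_induction_on generalizing b with
  | _ m ih =>
  have hlow : lowerDegreeSpan (Algebra.adjoin A {z, w}) u m ≤ M :=
    Submodule.span_le.mpr fun _ ⟨b, hb, i, hi, hq⟩ => hq ▸ ih i hi hb
  have hz : z ∈ Algebra.adjoin A {z, u} := Algebra.subset_adjoin (by simp)
  have hu : u ∈ Algebra.adjoin A {z, u} := Algebra.subset_adjoin (by simp)
  have hw : w ∈ Algebra.adjoin A {w, z ^ ℓ * u + p} := Algebra.subset_adjoin (by simp)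
  have hv : z ^ ℓ * u + p ∈ Algebra.adjoin A {w, z ^ ℓ * u + p} :=
    Algebra.subset_adjoin (by simp)
  have hwB : w ∈ Algebra.adjoin A {z, w} := Algebra.subset_adjoin (by simp)
  have hzB : z ∈ Algebra.adjoin A {z, w} := Algebra.subset_adjoin (by simp)
  have hspan := mem_span_pow_mul_pow_of_mem_adjoin hb
  clear hb
  induction hspan using Submodule.span_induction with
  | mem q hq =>
    obtain ⟨i, j, rfl⟩ := hq
    rcases pow_mul_pow_eq_of_mul_eq_one hzw i j with ⟨d, hd⟩ | ⟨d, hd⟩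
    · rw [hd]
      exact Submodule.mem_sup_left <| (Subalgebra.mem_toSubmodule _).mpr <|
        mul_mem (pow_mem hz d) (pow_mem hu m)
    · have hpow : (z * w) ^ (ℓ * m) = 1 := by rw [hzw, one_pow]
      have key : w ^ d * u ^ m = w ^ (d + ℓ * m) * (z ^ ℓ * u + p) ^ m -
          w ^ (d + ℓ * m) * ((z ^ ℓ * u + p) ^ m - (z ^ ℓ) ^ m * u ^ m) := by
        linear_combination -(w ^ d * u ^ m) * hpow
      rw [hd, key]
      refine sub_mem (Submodule.mem_sup_right <| (Subalgebra.mem_toSubmodule _).mpr <|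
        mul_mem (pow_mem hw _) (pow_mem hv m)) (hlow ?_)
      exact mul_mem_lowerDegreeSpan_of_mem (pow_mem hwB _)
        (pow_sub_leading_mem_lowerDegreeSpan (pow_mem hzB ℓ) hp m)
  | zero => simp
  | add q r _ _ hq hr => rw [add_mul]; exact add_mem hq hr
  | smul a q _ hq => rw [smul_mul_assoc]; exact Submodule.smul_mem _ a hq

theorem adjoin_le_sup_adjoin (hzw : z * w = 1) (hp : p ∈ Algebra.adjoin A {z, w}) (ℓ : ℕ) :
    Subalgebra.toSubmodule (Algebra.adjoin A {z, w, u}) ≤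
      Subalgebra.toSubmodule (Algebra.adjoin A {z, u}) ⊔
        Subalgebra.toSubmodule (Algebra.adjoin A {w, z ^ ℓ * u + p}) := by
  intro c hc
  rw [show ({z, w, u} : Set L) = {z, w} ∪ {u} by rw [Set.insert_union, Set.singleton_union],
    Subalgebra.mem_toSubmodule, Algebra.adjoin_union_eq_adjoin_adjoin,
    Subalgebra.mem_restrictScalars, Algebra.adjoin_singleton_eq_range_aeval] at hc
  obtain ⟨f, rfl⟩ := hc
  rw [AlgHom.toRingHom_eq_coe, RingHom.coe_coe, Polynomial.aeval_eq_sum_range]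
  exact sum_mem fun i _ => mul_pow_mem_sup_adjoin hzw hp ℓ i (f.coeff i).2

end LaurentChange

theorem IsLocalization.Away.eq_top_of_range_le_of_invSelf_mem {A R S : Type*} [CommSemiring A]
    [CommSemiring R] [CommSemiring S] [Algebra A R] [Algebra A S] [Algebra R S]
    [IsScalarTower A R S] (r : R) [IsLocalization.Away r S] {T : Subalgebra A S}
    (hrange : (IsScalarTower.toAlgHom A R S).range ≤ T)
    (hinv : IsLocalization.Away.invSelf r ∈ T) : T = ⊤ := by
  refine eq_top_iff.mpr fun c _ => ?_
  obtain ⟨n, a, h⟩ := IsLocalization.Away.surj r c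
  have hc : c = algebraMap R S a * IsLocalization.Away.invSelf r ^ n := by
    rw [← h, mul_assoc, ← mul_pow, IsLocalization.Away.mul_invSelf, one_pow, mul_one]
  rw [hc]
  exact mul_mem (hrange ⟨a, rfl⟩) (pow_mem hinv n)

theorem Ideal.Quotient.adjoin_mk_X_eq_top {A : Type*} [CommRing A] (I : Ideal (Polynomial A)) :
    Algebra.adjoin A {Ideal.Quotient.mk I Polynomial.X} = ⊤ := by
  rw [← Ideal.Quotient.mkₐ_eq_mk A, ← Set.image_singleton, Algebra.adjoin_image,
    Polynomial.adjoin_X, Algebra.map_top, AlgHom.range_eq_top]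
  exact Ideal.Quotient.mkₐ_surjective A I

theorem Polynomial.adjoin_image_C_union_X_eq_top {A R : Type*} [CommSemiring A] [CommSemiring R]
    [Algebra A R] {s : Set R} (hs : Algebra.adjoin A s = ⊤) :
    Algebra.adjoin A (Polynomial.C '' s ∪ {Polynomial.X}) = ⊤ := by
  refine eq_top_iff.mpr fun f _ => ?_
  have hC (r : R) : Polynomial.C r ∈ Algebra.adjoin A (Polynomial.C '' s) := by
    change algebraMap R (Polynomial R) r ∈
      Algebra.adjoin A (IsScalarTower.toAlgHom A R (Polynomial R) '' s)
    rw [Algebra.adjoin_image, hs, Algebra.map_top]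
    exact ⟨r, rfl⟩
  rw [f.as_sum_range_C_mul_X_pow]
  exact sum_mem fun i _ => mul_mem (Algebra.adjoin_mono Set.subset_union_left (hC _))
    (pow_mem (Algebra.subset_adjoin (Set.mem_union_right _ (Set.mem_singleton _))) i)

theorem range_toAlgHom_wChart_eq_adjoin (A : Type*) [CommRing A] (x y : A) :
    (IsScalarTower.toAlgHom A (WChart A x y) (WOverlap A x y)).range =
      Algebra.adjoin A
        {@algebraMap (WChart A x y) (WOverlap A x y) Polynomial.commSemiring _ _
            (Polynomial.C (Ideal.Quotient.mk _ Polynomial.X)),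
          @algebraMap (WChart A x y) (WOverlap A x y) Polynomial.commSemiring _ _
            Polynomial.X} := by
  have hgen := Polynomial.adjoin_image_C_union_X_eq_top (Ideal.Quotient.adjoin_mk_X_eq_top
    (A := A) (Ideal.span {Polynomial.C x - Polynomial.C y * Polynomial.X}))
  rw [Set.image_singleton, Set.singleton_union] at hgen
  rw [← Algebra.map_top, ← hgen, ← Algebra.adjoin_image, Set.image_pair]
  rfl

/-- Čech complex of the two-chart cover: `W₀ = Spec R₀[u]` and `W_∞ = Spec A[z'][u']` meet in
`Spec (R₀)_z[u]`, glued by `z' = z⁻¹`, `u' = z^ℓ·u + p`. A `1`-cocycle is an element `c` of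
`(R₀)_z[u]`; it is a coboundary when `c = b₀ - b_∞` with `b₀` from `R₀[u]` and `b_∞` in the
`A`-subalgebra generated by `z⁻¹` and `z^ℓ·u + p`. -/
theorem stmt_13_general (A : Type*) [CommRing A] (x y : A) (ℓ : ℕ)
    (p : WOverlap A x y)
    (hp : p ∈ Algebra.adjoin A
      ({@algebraMap (WChart A x y) (WOverlap A x y) Polynomial.commSemiring _ _
          (Polynomial.C (Ideal.Quotient.mk _ Polynomial.X)),
        IsLocalization.Away.invSelf
          (Polynomial.C (Ideal.Quotient.mk _ Polynomial.X : BlowChart A x y) : WChart A x y)} :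
        Set (WOverlap A x y)))
    (c : WOverlap A x y) :
    ∃ b₀ : WChart A x y,
      ∃ bi ∈ Algebra.adjoin A
        ({IsLocalization.Away.invSelf
            (Polynomial.C (Ideal.Quotient.mk _ Polynomial.X : BlowChart A x y) : WChart A x y),
          (@algebraMap (WChart A x y) (WOverlap A x y) Polynomial.commSemiring _ _
              (Polynomial.C (Ideal.Quotient.mk _ Polynomial.X : BlowChart A x y))) ^ ℓ *
            @algebraMap (WChart A x y) (WOverlap A x y) Polynomial.commSemiring _ _ Polynomial.X + p} :
          Set (WOverlap A x y)),
        c = @algebraMap (WChart A x y) (WOverlap A x y) Polynomial.commSemiring _ _ b₀ - bi := by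
  set zR : WChart A x y := Polynomial.C (Ideal.Quotient.mk _ Polynomial.X)
  have hrange := range_toAlgHom_wChart_eq_adjoin A x y
  have hc : c ∈ Algebra.adjoin A
      {@algebraMap (WChart A x y) (WOverlap A x y) Polynomial.commSemiring _ _ zR,
        IsLocalization.Away.invSelf zR,
        @algebraMap (WChart A x y) (WOverlap A x y) Polynomial.commSemiring _ _ Polynomial.X} := by
    rw [IsLocalization.Away.eq_top_of_range_le_of_invSelf_mem zR
      (hrange.trans_le (Algebra.adjoin_mono (Set.insert_subset_insert (Set.subset_insert _ _))))
      (Algebra.subset_adjoin (by simp))]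
    trivial
  obtain ⟨b, hb, b', hb', rfl⟩ := Submodule.mem_sup.mp
    (adjoin_le_sup_adjoin (IsLocalization.Away.mul_invSelf zR) hp ℓ hc)
  obtain ⟨b₀, rfl⟩ : b ∈ (IsScalarTower.toAlgHom A (WChart A x y) (WOverlap A x y)).range :=
    hrange ▸ hb
  exact ⟨b₀, -b', neg_mem hb', (sub_neg_eq_add _ _).symm⟩

/-- `H¹(W, O_W) = 0` for any `M(ℓ)`-torsor `W` over the blow-up `S̃` of the affine
surface `S = Spec A` at the complete-intersection point `o = V(x,y)`, computed by Čech
cohomology for the standard two-chart cover: `W` is glued from `W₀ = Spec R₀[u]`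
(with `R₀ = A[z]/(x - yz)`) and `W_∞ = Spec A[z'][u']` over the overlap
`Spec (R₀)_z[u]` by `z' = z⁻¹`, `u' = z^ℓ·u + p` for some `p ∈ A[z^{±1}]`.  The claim:
every Čech `1`-cocycle with values in `O_W` for this cover, i.e. every element `c` of
`(R₀)_z[u]`, is a coboundary: `c = b₀ - b_∞` with `b₀` in the image of `R₀[u]` and
`b_∞` in the image of `A[z'][u']`, the `A`-subalgebra generated by `z⁻¹` and
`z^ℓ·u + p`. -/
theorem stmt_13 (A : Type*) [CommRing A] [IsDomain A] (x y : A) (ℓ : ℕ)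
    (p : WOverlap A x y)
    (hp : p ∈ Algebra.adjoin A
      ({@algebraMap (WChart A x y) (WOverlap A x y) Polynomial.commSemiring _ _
          (Polynomial.C (Ideal.Quotient.mk _ Polynomial.X)),
        IsLocalization.Away.invSelf
          (Polynomial.C (Ideal.Quotient.mk _ Polynomial.X : BlowChart A x y) : WChart A x y)} :
        Set (WOverlap A x y)))
    (c : WOverlap A x y) :
    ∃ b₀ : WChart A x y,
      ∃ bi ∈ Algebra.adjoin A
        ({IsLocalization.Away.invSelf
            (Polynomial.C (Ideal.Quotient.mk _ Polynomial.X : BlowChart A x y) : WChart A x y),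
          (@algebraMap (WChart A x y) (WOverlap A x y) Polynomial.commSemiring _ _
              (Polynomial.C (Ideal.Quotient.mk _ Polynomial.X : BlowChart A x y))) ^ ℓ *
            @algebraMap (WChart A x y) (WOverlap A x y) Polynomial.commSemiring _ _ Polynomial.X + p} :
          Set (WOverlap A x y)),
        c = @algebraMap (WChart A x y) (WOverlap A x y) Polynomial.commSemiring _ _ b₀ - bi :=
  stmt_13_general A x y ℓ p hp c
end

section
/- Let θ : W → S̃ be a locally trivial 𝔸¹-bundle over the blow-up S̃ of a smooth point o of a surface S with exceptional divisor E ≅ ℙ¹_κ, and let π = τ ∘ θ : W → S. If the restriction W|_E → E is a trivial 𝔸¹-bundle (i.e. a line bundle over ℙ¹_κ), then π is not an affine morphism. -/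
open AlgebraicGeometry CategoryTheory

/-!
The zero section `σ` is a closed immersion, hence affine, so if `π = θ ≫ τ` were affine then so
would be `σ ≫ π`, which is the contraction `E ⟶ Spec κ ⟶ S` of the exceptional divisor. A morphism
out of the separated scheme `Spec κ` is separated, so affineness cancels and `E` would be affine
over `Spec κ`, hence affine.
-/

lemma isAffine_of_isAffineHom_comp {E X S : Scheme} (q : E ⟶ X) (p : X ⟶ S) [IsAffine X]
    [IsAffineHom (q ≫ p)] : IsAffine E :=
  have : IsAffineHom q := .of_comp q p
  isAffine_of_isAffineHom q

theorem stmt_14_general {κ : Type*} [Field κ] (W S' S E : Scheme)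
    (θ : W ⟶ S') (τ : S' ⟶ S) (iE : E ⟶ S')
    (q : E ⟶ Spec (CommRingCat.of κ))
    (pt : Spec (CommRingCat.of κ) ⟶ S) (hcontr : iE ≫ τ = q ≫ pt)
    (σ : E ⟶ W) (hσ : σ ≫ θ = iE) [IsClosedImmersion σ]
    (hE : ¬ IsAffine E) :
    ¬ IsAffineHom (θ ≫ τ) := by
  intro hπ
  have : IsAffineHom (q ≫ pt) := by
    rw [← hcontr, ← hσ, Category.assoc]
    infer_instance
  exact hE (isAffine_of_isAffineHom_comp q pt)

/-- Let `θ : W ⟶ S̃` be a locally trivial `𝔸¹`-bundle over the blow-up `τ : S̃ ⟶ S` of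
a smooth point `o` of a surface `S`, with exceptional divisor `E ≅ ℙ¹_κ`, and suppose
the restriction `W|_E → E` is a trivial `𝔸¹`-bundle, i.e. a line bundle over `ℙ¹_κ`.
Then `π = θ ≫ τ : W ⟶ S` is not an affine morphism.

Formalization: `iE : E ⟶ S̃` is the closed immersion of the exceptional divisor, which
is proper over the residue field `κ` (via `q`, with `E ≅ ℙ¹_κ` in particular not
affine) and is contracted by `τ` to the point `pt : Spec κ ⟶ S`; the triviality of
`W|_E → E` provides the zero section `σ : E ⟶ W` of `θ` over `iE`, a closed immersion.
Conclusion: `θ ≫ τ` is not affine. -/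
theorem stmt_14 {κ : Type*} [Field κ] (W S' S E : Scheme)
    (θ : W ⟶ S') (τ : S' ⟶ S) (iE : E ⟶ S') [IsClosedImmersion iE]
    (q : E ⟶ Spec (CommRingCat.of κ)) [IsProper q]
    (pt : Spec (CommRingCat.of κ) ⟶ S) (hcontr : iE ≫ τ = q ≫ pt)
    (σ : E ⟶ W) (hσ : σ ≫ θ = iE) [IsClosedImmersion σ]
    (hE : ¬ IsAffine E) :
    ¬ IsAffineHom (θ ≫ τ) :=
  stmt_14_general W S' S E θ τ iE q pt hcontr σ hσ hE
end
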